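/- arXiv:2605.12977 — 3 statements merged into one kernel-verified Lean document; each statement's English description precedes it below -/
import Mathlib

section
/- Let n, n1, n2 be positive integers, F1 an n×n1 real matrix, F2 an n×n2 real matrix, D any n×n real matrix, and Σf a positive definite (n1+n2)×(n1+n2) real matrix with block decomposition Σf = [[Σ11, Σ12],[Σ21, Σ22]] (Σ11 is n1×n1, Σ22 is n2×n2). Define Ω = Σ11 − Σ12 Σ22⁻¹ Σ21 and G2 = F1 Σ12 Σ22^{−1/2} + F2 Σ22^{1/2}. Then Ω is positive definite and [F1 F2] Σf [F1 F2]ᵀ + D = [F1 G2] · [[Ω, 0],[0, I_{n2}]] · [F1 G2]ᵀ + D, where [A B] denotes the horizontal concatenation of matrices A and B. Consequently, every covariance model of the form [F1 F2] Σf [F1 F2]ᵀ + D with Σf positive definite can be written in the form [F1 G2] · [[Ω, 0],[0, I]] · [F1 G2]ᵀ + D with Ω positive definite. -/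
/-!
Writing `S22 = R Rᵀ`, the block LDLᵀ factorization `Σf = L · diag(Ω, 1) · Lᵀ` with
`L = [[1, S12 Rᵀ⁻¹], [0, R]]` turns `[F1 F2] Σf [F1 F2]ᵀ` into `[F1 G2] diag(Ω, 1) [F1 G2]ᵀ`,
because `[F1 F2] L = [F1 G2]`. Positive definiteness of `Ω` comes from the same kind of
factorization `Σf = L' · diag(Ω, S22) · L'ᴴ` with `L'` unitriangular: congruence by an
invertible matrix preserves positive definiteness, and so does passing to a diagonal block.
-/

open Matrix

namespace Matrix

section Factorization

variable {l m n α : Type*} [Fintype m] [Fintype n] [DecidableEq m] [DecidableEq n] [CommRing α]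

theorem fromBlocks_transpose_eq_mul_fromBlocks_mul_transpose (A : Matrix m m α)
    (B : Matrix m n α) {R : Matrix n n α} (hR : IsUnit R.det) :
    fromBlocks A B Bᵀ (R * Rᵀ) =
      fromBlocks 1 (B * Rᵀ⁻¹) 0 R * fromBlocks (A - B * (R * Rᵀ)⁻¹ * Bᵀ) 0 0 1 *
        (fromBlocks 1 (B * Rᵀ⁻¹) 0 R)ᵀ := by
  have hRt : IsUnit Rᵀ.det := by rwa [det_transpose]
  simp only [fromBlocks_transpose, fromBlocks_multiply, transpose_mul, transpose_nonsing_inv,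
    transpose_transpose, transpose_one, transpose_zero, Matrix.mul_inv_rev, Matrix.mul_assoc,
    Matrix.one_mul, Matrix.mul_one, Matrix.zero_mul, Matrix.mul_zero, add_zero, zero_add,
    nonsing_inv_mul _ hRt, mul_nonsing_inv_cancel_left _ _ hR, sub_add_cancel]

theorem fromCols_mul_fromBlocks_mul_transpose_eq (F₁ : Matrix l m α) (F₂ : Matrix l n α)
    (A : Matrix m m α) (B : Matrix m n α) {R : Matrix n n α} (hR : IsUnit R.det) :
    Matrix.fromCols F₁ F₂ * fromBlocks A B Bᵀ (R * Rᵀ) * (Matrix.fromCols F₁ F₂)ᵀ =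
      Matrix.fromCols F₁ (F₁ * B * Rᵀ⁻¹ + F₂ * R) *
          Matrix.fromBlocks (A - B * (R * Rᵀ)⁻¹ * Bᵀ) 0 0 (1 : Matrix n n α) *
        (Matrix.fromCols F₁ (F₁ * B * Rᵀ⁻¹ + F₂ * R))ᵀ := by
  have hcols : Matrix.fromCols F₁ F₂ * fromBlocks 1 (B * Rᵀ⁻¹) 0 R =
      Matrix.fromCols F₁ (F₁ * B * Rᵀ⁻¹ + F₂ * R) := by
    simp [fromCols_mul_fromBlocks, Matrix.mul_assoc]
  rw [fromBlocks_transpose_eq_mul_fromBlocks_mul_transpose A B hR, ← hcols]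
  simp only [transpose_mul, Matrix.mul_assoc]

end Factorization

variable {m n K : Type*} [Fintype m] [Fintype n] [DecidableEq m] [DecidableEq n]
  [Field K] [PartialOrder K] [StarRing K]

theorem PosDef.schurComplement₂₂ {A : Matrix m m K} {B : Matrix m n K} {D : Matrix n n K}
    (h : (fromBlocks A B Bᴴ D).PosDef) : (A - B * D⁻¹ * Bᴴ).PosDef := by
  have hD : D.PosDef := h.submatrix Sum.inr_injective
  have := hD.isUnit.invertible
  set L : Matrix (m ⊕ n) (m ⊕ n) K := fromBlocks 1 (B * D⁻¹) 0 1
  have hL : IsUnit L := isUnit_fromBlocks_zero₂₁.mpr ⟨isUnit_one, isUnit_one⟩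
  have hfac : fromBlocks A B Bᴴ D = L * fromBlocks (A - B * D⁻¹ * Bᴴ) 0 0 D * star L := by
    rw [← invOf_eq_nonsing_inv, fromBlocks_eq_of_invertible₂₂ A B Bᴴ D]
    simp [L, star_eq_conjTranspose, fromBlocks_conjTranspose, conjTranspose_nonsing_inv, hD.1.eq]
  rw [hfac, hL.posDef_star_right_conjugate_iff] at h
  exact h.submatrix Sum.inl_injective

end Matrix

theorem stmt1_general (n n1 n2 : ℕ)
    (F1 : Matrix (Fin n) (Fin n1) ℝ) (F2)
    (D : Matrix (Fin n) (Fin n) ℝ)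
    (S11 : Matrix (Fin n1) (Fin n1) ℝ) (S12 : Matrix (Fin n1) (Fin n2) ℝ)
    (S21 : Matrix (Fin n2) (Fin n1) ℝ) (S22 : Matrix (Fin n2) (Fin n2) ℝ)
    (hSf : (Matrix.fromBlocks S11 S12 S21 S22).PosDef)
    (R : Matrix (Fin n2) (Fin n2) ℝ) (hR : R.PosDef) (hRR : R * R = S22) :
    (S11 - S12 * S22⁻¹ * S21).PosDef ∧
      Matrix.fromCols F1 F2 * Matrix.fromBlocks S11 S12 S21 S22 *
          (Matrix.fromCols F1 F2)ᵀ + D =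
        Matrix.fromCols F1 (F1 * S12 * R⁻¹ + F2 * R) *
            Matrix.fromBlocks (S11 - S12 * S22⁻¹ * S21) 0 0 (1 : Matrix (Fin n2) (Fin n2) ℝ) *
            (Matrix.fromCols F1 (F1 * S12 * R⁻¹ + F2 * R))ᵀ + D := by
  obtain rfl : S21 = S12ᵀ := by
    rw [← conjTranspose_eq_transpose_of_trivial, (isHermitian_fromBlocks_iff.mp hSf.1).2.1]
  have hRt : Rᵀ = R := by rw [← conjTranspose_eq_transpose_of_trivial, hR.1.eq]
  have hcov := fromCols_mul_fromBlocks_mul_transpose_eq F1 F2 S11 S12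
    ((isUnit_iff_isUnit_det R).mp hR.isUnit)
  rw [hRt, hRR] at hcov
  exact ⟨by simpa [conjTranspose_eq_transpose_of_trivial] using hSf.schurComplement₂₂,
    congrArg (· + D) hcov⟩

/-- Every extended covariance model `[F1 F2] Σf [F1 F2]ᵀ + D` with `Σf`
positive definite can be rewritten as `[F1 G2] [[Ω,0],[0,I]] [F1 G2]ᵀ + D`, where
`Ω = S11 - S12 S22⁻¹ S21` is positive definite (the Schur complement of `S22` in `Σf`)
and `G2 = F1 S12 S22^{-1/2} + F2 S22^{1/2}`, with `R` the positive definite square root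
of `S22` (so `S22^{1/2} = R` and `S22^{-1/2} = R⁻¹`). -/
theorem stmt1 (n n1 n2 : ℕ) (hn : 0 < n) (hn1 : 0 < n1) (hn2 : 0 < n2)
    (F1 : Matrix (Fin n) (Fin n1) ℝ) (F2)
    (D : Matrix (Fin n) (Fin n) ℝ)
    (S11 : Matrix (Fin n1) (Fin n1) ℝ) (S12 : Matrix (Fin n1) (Fin n2) ℝ)
    (S21 : Matrix (Fin n2) (Fin n1) ℝ) (S22 : Matrix (Fin n2) (Fin n2) ℝ)
    (hSf : (Matrix.fromBlocks S11 S12 S21 S22).PosDef)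
    (R : Matrix (Fin n2) (Fin n2) ℝ) (hR : R.PosDef) (hRR : R * R = S22) :
    (S11 - S12 * S22⁻¹ * S21).PosDef ∧
      Matrix.fromCols F1 F2 * Matrix.fromBlocks S11 S12 S21 S22 *
          (Matrix.fromCols F1 F2)ᵀ + D =
        Matrix.fromCols F1 (F1 * S12 * R⁻¹ + F2 * R) *
            Matrix.fromBlocks (S11 - S12 * S22⁻¹ * S21) 0 0 (1 : Matrix (Fin n2) (Fin n2) ℝ) *
            (Matrix.fromCols F1 (F1 * S12 * R⁻¹ + F2 * R))ᵀ + D :=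
  stmt1_general n n1 n2 F1 F2 D S11 S12 S21 S22 hSf R hR hRR
end

section
/- Let n be a positive integer and let A be a positive definite n×n real matrix. Then for every positive definite n×n real matrix Ω, tr(Ω⁻¹ A) + log det Ω ≥ n + log det A, with equality if and only if Ω = A. In particular, Ω = A is the unique minimizer over positive definite matrices of the function Ω ↦ tr(Ω⁻¹ A) + log det Ω. -/
/-!
With `S = Ω^{1/2}`, the matrix `Ω⁻¹ A` is similar to the positive definite matrix
`C = S⁻¹ A S⁻¹`, so `tr(Ω⁻¹ A) + log det Ω - n - log det A = tr C - log det C - n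
= ∑ᵢ (λᵢ - 1 - log λᵢ)` over the eigenvalues `λᵢ > 0` of `C`. Each term is nonnegative by
`log x ≤ x - 1`, and vanishes only at `λᵢ = 1`; all eigenvalues equal to `1` means `C = 1`,
that is `Ω = A`.
-/

open Matrix

namespace Real

lemma sub_one_sub_log_nonneg {x : ℝ} (hx : 0 < x) : 0 ≤ x - 1 - log x := by
  linarith [log_le_sub_one_of_pos hx]

lemma sub_one_sub_log_eq_zero_iff {x : ℝ} (hx : 0 < x) : x - 1 - log x = 0 ↔ x = 1 := by
  refine ⟨fun h => ?_, fun h => by simp [h]⟩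
  by_contra hx1
  linarith [log_lt_sub_one_of_pos hx hx1]

end Real

lemma Units.conj_eq_one_iff {M : Type*} [Monoid M] (u : Mˣ) (a : M) :
    ↑u * a * ↑u⁻¹ = 1 ↔ a = 1 := by
  rw [Units.mul_inv_eq_one]
  simpa using Units.mul_right_inj u (b := a) (c := 1)

namespace Matrix

variable {ι : Type*} [Fintype ι] [DecidableEq ι]

lemma IsHermitian.eq_one_of_eigenvalues_eq_one {𝕜 : Type*} [RCLike 𝕜] {A : Matrix ι ι 𝕜}
    (hA : A.IsHermitian) (h : ∀ i, hA.eigenvalues i = 1) : A = 1 :=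
  CFC.eq_one_of_spectrum_subset_one (R := ℝ) A
    (by rw [hA.spectrum_real_eq_range_eigenvalues]; rintro _ ⟨i, rfl⟩; exact h i) hA.isSelfAdjoint

lemma PosDef.trace_sub_log_det_sub_card {C : Matrix ι ι ℝ} (hC : C.PosDef) :
    C.trace - Real.log C.det - Fintype.card ι =
      ∑ i, (hC.1.eigenvalues i - 1 - Real.log (hC.1.eigenvalues i)) := by
  rw [hC.1.trace_eq_sum_eigenvalues, hC.1.det_eq_prod_eigenvalues, RCLike.ofReal_real_eq_id]
  simp only [id, Real.log_prod fun i _ => (hC.eigenvalues_pos i).ne', Finset.sum_sub_distrib,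
    Finset.sum_const, Finset.card_univ, nsmul_eq_mul, mul_one]
  ring

lemma PosDef.card_add_log_det_le_trace {C : Matrix ι ι ℝ} (hC : C.PosDef) :
    Fintype.card ι + Real.log C.det ≤ C.trace := by
  have := hC.trace_sub_log_det_sub_card ▸
    Finset.sum_nonneg fun i _ => Real.sub_one_sub_log_nonneg (hC.eigenvalues_pos i)
  linarith

lemma PosDef.trace_eq_card_add_log_det_iff {C : Matrix ι ι ℝ} (hC : C.PosDef) :
    C.trace = Fintype.card ι + Real.log C.det ↔ C = 1 := by
  refine ⟨fun h => hC.1.eq_one_of_eigenvalues_eq_one fun i => ?_, ?_⟩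
  · have hsum := hC.trace_sub_log_det_sub_card
    rw [h, add_sub_cancel_right, sub_self, eq_comm, Finset.sum_eq_zero_iff_of_nonneg
      fun i _ => Real.sub_one_sub_log_nonneg (hC.eigenvalues_pos i)] at hsum
    exact (Real.sub_one_sub_log_eq_zero_iff (hC.eigenvalues_pos i)).1 (hsum i (Finset.mem_univ i))
  · rintro rfl
    simp

open scoped MatrixOrder in
lemma PosDef.exists_inv_mul_eq_units_conj {Ω A : Matrix ι ι ℝ} (hΩ : Ω.PosDef) (hA : A.PosDef) :
    ∃ (U : (Matrix ι ι ℝ)ˣ) (C : Matrix ι ι ℝ),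
      C.PosDef ∧ Ω⁻¹ * A = (U : Matrix ι ι ℝ) * C * (↑U⁻¹ : Matrix ι ι ℝ) := by
  set S := CFC.sqrt Ω
  have hS : S.PosDef := (hΩ.isStrictlyPositive.sqrt Ω).posDef
  have hSinv : (S⁻¹)ᴴ = S⁻¹ := by rw [conjTranspose_nonsing_inv, hS.isHermitian.eq]
  refine ⟨hS.isUnit.unit⁻¹, S⁻¹ * A * S⁻¹, ?_, ?_⟩
  · have := hA.conjTranspose_mul_mul_same
      (mulVec_injective_iff_isUnit.2 (isUnit_nonsing_inv_iff.2 hS.isUnit))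
    rwa [hSinv] at this
  · have hΩinv : Ω⁻¹ = S⁻¹ * S⁻¹ := by rw [← CFC.sqrt_mul_sqrt_self Ω, mul_inv_rev]
    simp [hΩinv, Matrix.mul_assoc, nonsing_inv_mul S ((isUnit_iff_isUnit_det S).1 hS.isUnit)]

end Matrix

theorem stmt8_general (n : ℕ)
    (A : Matrix (Fin n) (Fin n) ℝ) (hA : A.PosDef) :
    ∀ Om : Matrix (Fin n) (Fin n) ℝ, Om.PosDef →
      ((Om⁻¹ * A).trace + Real.log Om.det ≥ (n : ℝ) + Real.log A.det ∧
        ((Om⁻¹ * A).trace + Real.log Om.det = (n : ℝ) + Real.log A.det ↔ Om = A)) := by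
  intro Ω hΩ
  obtain ⟨U, C, hC, hM⟩ := hΩ.exists_inv_mul_eq_units_conj hA
  have htrace : (Ω⁻¹ * A).trace = C.trace := by rw [hM, trace_units_conj]
  have hlogdet : Real.log C.det = Real.log A.det - Real.log Ω.det := by
    rw [← det_units_conj U C, ← hM, det_mul, det_nonsing_inv, Ring.inverse_eq_inv',
      Real.log_mul (inv_ne_zero hΩ.det_pos.ne') hA.det_pos.ne', Real.log_inv]
    ring
  have hone : C = 1 ↔ Ω = A := by
    have h1 : Ω⁻¹ * A = 1 ↔ Ω = A := by
      simpa [coe_units_inv] using hΩ.isUnit.unit.inv_mul_eq_one (a := A)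
    rw [← h1, hM, Units.conj_eq_one_iff]
  have hle := hC.card_add_log_det_le_trace
  have heq := hC.trace_eq_card_add_log_det_iff
  rw [Fintype.card_fin] at hle heq
  refine ⟨by linarith, ?_⟩
  rw [← hone, ← heq, htrace, hlogdet]
  constructor <;> intro h <;> linarith

/-- For positive definite `A`, the function
`Ω ↦ tr(Ω⁻¹ A) + log det Ω` over positive definite matrices is minimized uniquely
at `Ω = A`, with minimum value `n + log det A`. -/
theorem stmt8 (n : ℕ) (hn : 0 < n)
    (A : Matrix (Fin n) (Fin n) ℝ) (hA : A.PosDef) :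
    ∀ Om : Matrix (Fin n) (Fin n) ℝ, Om.PosDef →
      ((Om⁻¹ * A).trace + Real.log Om.det ≥ (n : ℝ) + Real.log A.det ∧
        ((Om⁻¹ * A).trace + Real.log Om.det = (n : ℝ) + Real.log A.det ↔ Om = A)) :=
  stmt8_general n A hA
end

section
/- Let (S, 𝒮, μ) be a measure space with μ σ-finite, and let f, g : S → ℝ be nonnegative measurable functions with 0 < ∫ f dμ < ∞ and ∫ g dμ < ∞. Define the probability density q = f / (∫ f dμ), and assume the functions s ↦ q(s) log f(s), s ↦ q(s) log g(s), and s ↦ q(s) log q(s) are μ-integrable (interpreting each integrand as 0 where q(s) = 0), and that g(s) > 0 for μ-almost every s with q(s) > 0. If ∫ q log g dμ ≥ ∫ q log f dμ, then log( ∫ g dμ ) ≥ log( ∫ f dμ ), i.e., ∫ g dμ ≥ ∫ f dμ. (This is the monotonicity property underlying the expectation-maximization algorithm: if the new parameter's complete-data log-likelihood, averaged under the posterior determined by the old parameter, is at least that of the old parameter, then the marginal likelihood does not decrease.) -/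
open MeasureTheory

/-- Monotonicity property underlying the EM algorithm. With
`q = f / ∫ f dμ`, if the `q`-average of `log g` is at least the `q`-average of
`log f`, then `log ∫ g dμ ≥ log ∫ f dμ`, i.e., `∫ g dμ ≥ ∫ f dμ`. -/
theorem stmt12 {S : Type*} [MeasurableSpace S] (μ : Measure S) [SigmaFinite μ]
    (f g : S → ℝ) (hf_meas : Measurable f) (hg_meas : Measurable g)
    (hf_nonneg : ∀ s, 0 ≤ f s) (hg_nonneg : ∀ s, 0 ≤ g s)
    (hf_int : Integrable f μ) (hf_pos : 0 < ∫ s, f s ∂μ)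
    (hg_int : Integrable g μ)
    (hqlogf_int : Integrable (fun s => (f s / ∫ t, f t ∂μ) * Real.log (f s)) μ)
    (hqlogg_int : Integrable (fun s => (f s / ∫ t, f t ∂μ) * Real.log (g s)) μ)
    (hqlogq_int : Integrable
      (fun s => (f s / ∫ t, f t ∂μ) * Real.log (f s / ∫ t, f t ∂μ)) μ)
    (hg_pos : ∀ᵐ s ∂μ, 0 < f s / ∫ t, f t ∂μ → 0 < g s)
    (hEM : (∫ s, (f s / ∫ t, f t ∂μ) * Real.log (g s) ∂μ) ≥
      ∫ s, (f s / ∫ t, f t ∂μ) * Real.log (f s) ∂μ) :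
    Real.log (∫ s, g s ∂μ) ≥ Real.log (∫ s, f s ∂μ) ∧
      (∫ s, g s ∂μ) ≥ ∫ s, f s ∂μ := by
  set I := ∫ t, f t ∂μ with hIdef
  set J := ∫ s, g s ∂μ with hJdef
  have hI0 : 0 < I := hf_pos
  have hq_int : Integrable (fun s => f s / I) μ := hf_int.div_const I
  have hq_sum : ∫ s, f s / I ∂μ = 1 := by
    rw [integral_div]; exact div_self hI0.ne'
  -- J > 0
  have hJ0 : 0 < J := by
    have hsf : 0 < μ (Function.support f) :=
      (integral_pos_iff_support_of_nonneg hf_nonneg hf_int).mp hf_pos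
    have hsub : Function.support f ≤ᵐ[μ] Function.support g := by
      filter_upwards [hg_pos] with s hs hsf
      have : 0 < f s := (hf_nonneg s).lt_of_ne (Ne.symm hsf)
      exact (hs (div_pos this hI0)).ne'
    have hsg : 0 < μ (Function.support g) :=
      lt_of_lt_of_le hsf (measure_mono_ae hsub)
    exact (integral_pos_iff_support_of_nonneg hg_nonneg hg_int).mpr hsg
  -- pointwise Gibbs inequality
  have hpt : ∀ᵐ s ∂μ,
      (f s / I) * Real.log (g s) - (f s / I) * Real.log (f s / I) ≤
        g s / J - f s / I + (f s / I) * Real.log J := by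
    filter_upwards [hg_pos] with s hs
    rcases (div_nonneg (hf_nonneg s) hI0.le).eq_or_lt with h | h
    · rw [← h]
      simp [div_nonneg (hg_nonneg s) hJ0.le]
    · have hgp : 0 < g s := hs h
      have hx : 0 < g s / (f s / I * J) := div_pos hgp (mul_pos h hJ0)
      have hlog := Real.log_le_sub_one_of_pos hx
      have hlogeq : Real.log (g s / (f s / I * J)) =
          Real.log (g s) - Real.log (f s / I) - Real.log J := by
        rw [Real.log_div hgp.ne' (mul_pos h hJ0).ne', Real.log_mul h.ne' hJ0.ne']
        ring
      rw [hlogeq] at hlog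
      have key : (f s / I) * (Real.log (g s) - Real.log (f s / I) - Real.log J) ≤
          (f s / I) * (g s / (f s / I * J) - 1) :=
        mul_le_mul_of_nonneg_left hlog h.le
      have hfs : 0 < f s := by
        have h2 : f s = f s / I * I := (div_mul_cancel₀ _ hI0.ne').symm
        rw [h2]; exact mul_pos h hI0
      have hrw : (f s / I) * (g s / (f s / I * J) - 1) = g s / J - f s / I := by
        field_simp
      rw [hrw] at key
      linarith
  -- integrate
  have hlhs_int : Integrable
      (fun s => (f s / I) * Real.log (g s) - (f s / I) * Real.log (f s / I)) μ :=
    hqlogg_int.sub hqlogq_int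
  have hA : Integrable (fun s => g s / J - f s / I) μ := (hg_int.div_const J).sub hq_int
  have hB : Integrable (fun s => (f s / I) * Real.log J) μ := hq_int.mul_const _
  have hrhs_int : Integrable
      (fun s => g s / J - f s / I + (f s / I) * Real.log J) μ := hA.add hB
  have hint := integral_mono_ae hlhs_int hrhs_int hpt
  have hgJ : ∫ s, g s / J ∂μ = 1 := by rw [integral_div]; exact div_self hJ0.ne'
  have hBval : ∫ s, (f s / I) * Real.log J ∂μ = Real.log J := by
    rw [integral_mul_const, hq_sum, one_mul]
  rw [integral_sub hqlogg_int hqlogq_int, integral_add hA hB,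
    integral_sub (hg_int.div_const J) hq_int, hgJ, hq_sum, hBval] at hint
  -- identity: ∫ q log f - ∫ q log q = log I
  have hid : (∫ s, (f s / I) * Real.log (f s) ∂μ) -
      (∫ s, (f s / I) * Real.log (f s / I) ∂μ) = Real.log I := by
    rw [← integral_sub hqlogf_int hqlogq_int]
    have heq : ∀ s, (f s / I) * Real.log (f s) - (f s / I) * Real.log (f s / I) =
        (f s / I) * Real.log I := by
      intro s
      rcases (hf_nonneg s).eq_or_lt with h | h
      · simp [← h]
      · rw [Real.log_div h.ne' hI0.ne']; ring
    simp_rw [heq]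
    rw [integral_mul_const, hq_sum, one_mul]
  have hloglog : Real.log I ≤ Real.log J := by linarith
  exact ⟨hloglog, (Real.log_le_log_iff hI0 hJ0).mp hloglog⟩
end
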